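/- Let St be a type of states and define Reach I L for I ⊆ St and L : List (St → St → Prop) by Reach I [] = I and Reach I (r :: L') = Reach {y | ∃ x ∈ I, r x y} L'. Let id_rel : St → St → Prop be the identity relation, id_rel x y ↔ x = y. Then for every initial set I and all lists A, B of transition relations: Reach I (A ++ id_rel :: B) = Reach I (A ++ B). Hence inserting or removing stutter transitions (whose semantics is the identity relation on states) at any position of a path does not change the reachable set; in particular, all step compositional paths that are stutter variants of one another have the same reachable states as the common stutter-free shallow compositional path obtained by deleting their stutter transitions, so one reachability analysis of the shallow path suffices for all of them. -/

import Mathlib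

def Reach {St : Type*} (I : Set St) : List (St → St → Prop) → Set St
  | [] => I
  | r :: L' => Reach {y | ∃ x ∈ I, r x y} L'

theorem reach_append {St : Type*} (I : Set St) (A B : List (St → St → Prop)) :
    Reach I (A ++ B) = Reach (Reach I A) B := by
  induction A generalizing I with
  | nil => rfl
  | cons r A ih => exact ih _

theorem reach_cons_of_forall_iff_eq {St : Type*} {r : St → St → Prop}
    (hr : ∀ x y, r x y ↔ x = y) (I : Set St) (L : List (St → St → Prop)) :
    Reach I (r :: L) = Reach I L := by
  have image_eq : {y | ∃ x ∈ I, r x y} = I := by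
    ext y
    simp [hr]
  rw [Reach, image_eq]

/-- **Stutter transitions do not change reachable states.**  If `id_rel` is the
identity relation (the semantics of a stutter transition), then inserting or
removing it at any position of a path leaves the reachable set unchanged.  In
particular all stutter variants of a step compositional path have the same
reachable states as the stutter-free shallow compositional path. -/
theorem reach_stutter_invariant
    {St : Type*} (id_rel : St → St → Prop)
    (hid : ∀ x y, id_rel x y ↔ x = y)
    (I : Set St) (A B : List (St → St → Prop)) :
    Reach I (A ++ id_rel :: B) = Reach I (A ++ B) := by
  rw [reach_append, reach_append, reach_cons_of_forall_iff_eq hid]
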